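/- Let G be a finite soluble group and H a k-submodular subgroup of G. Then H is U_k-subnormal in G, where U_k is the class of all supersoluble groups whose exponent is not divisible by the (k+1)-th power of any prime. -/

import Mathlib

open Pointwise

/-- A subgroup `H` of `K` is `n`-modularly embedded in `K` if either `H ◁ K`, or
`K/Core_K(H)` is a non-nilpotent group of order `p * q ^ n` with `|K : H| = p`
for some primes `p`, `q`. -/
def ModularlyEmbedded {G : Type*} [Group G] (n : ℕ) (H K : Subgroup G) : Prop :=
  H ≤ K ∧ ((H.subgroupOf K).Normal ∨
    ∃ p q : ℕ, p.Prime ∧ q.Prime ∧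
      ¬ Group.IsNilpotent (↥K ⧸ (H.subgroupOf K).normalCore) ∧
      Nat.card (↥K ⧸ (H.subgroupOf K).normalCore) = p * q ^ n ∧
      (H.subgroupOf K).index = p)

/-- `H` is `k`-submodular in `K` if there is a chain `H = H_0 ≤ H_1 ≤ ⋯ ≤ H_m = K`
such that `H_{i-1}` is `n_i`-modularly embedded in `H_i` for some natural number
`n_i ≤ k`, for every `i`. -/
def KSubmodularIn {G : Type*} [Group G] (k : ℕ) (H K : Subgroup G) : Prop :=
  ∃ (m : ℕ) (c : ℕ → Subgroup G), c 0 = H ∧ c m = K ∧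
    ∀ i < m, ∃ n : ℕ, 0 < n ∧ n ≤ k ∧ ModularlyEmbedded n (c i) (c (i + 1))

/-- A group is supersolvable if it has a normal series with cyclic factors
(for finite groups this is equivalent to having a chief series all of whose
factors are cyclic of prime order). -/
def IsSupersolvable (G : Type*) [Group G] : Prop :=
  ∃ (m : ℕ) (c : ℕ → Subgroup G), c 0 = ⊥ ∧ c m = ⊤ ∧
    (∀ i, (c i).Normal) ∧ (∀ i, i < m → c i ≤ c (i + 1)) ∧
    ∀ i, i < m → ∀ [_h : ((c i).subgroupOf (c (i + 1))).Normal],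
      IsCyclic (↥(c (i + 1)) ⧸ (c i).subgroupOf (c (i + 1)))

/-- The class `U_k`: supersoluble groups whose exponent is not divisible by
the `(k+1)`-th power of any prime. -/
def IsInUk (k : ℕ) (H : Type*) [Group H] : Prop :=
  IsSupersolvable H ∧ ∀ p : ℕ, p.Prime → ¬ p ^ (k + 1) ∣ Monoid.exponent H

/-- The `U_k`-residual of a group: the smallest normal subgroup whose quotient
lies in `U_k`. -/
def ukResidual (k : ℕ) (H : Type*) [Group H] : Subgroup H :=
  ⨅ N ∈ {N : Subgroup H | N.Normal ∧
    ∀ [_h : N.Normal], IsInUk k (H ⧸ N)}, N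

/-- `H` is `U_k`-subnormal in `G`: there is a chain
`H = H_0 ≤ H_1 ≤ ⋯ ≤ H_m = G` with the `U_k`-residual of each `H_i`
contained in `H_{i-1}`. -/
def UkSubnormal {G : Type*} [Group G] (k : ℕ) (H : Subgroup G) : Prop :=
  ∃ (m : ℕ) (c : ℕ → Subgroup G), c 0 = H ∧ c m = ⊤ ∧
    ∀ i, i < m → c i ≤ c (i + 1) ∧
      ukResidual k ↥(c (i + 1)) ≤ (c i).subgroupOf (c (i + 1))

/-! ### Auxiliary machinery -/

section Aux

open Subgroup

/-- A `U_k`-chain between two subgroups. -/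
def UkChain {G : Type*} [Group G] (k : ℕ) (H K : Subgroup G) : Prop :=
  ∃ (m : ℕ) (c : ℕ → Subgroup G), c 0 = H ∧ c m = K ∧
    ∀ i, i < m → c i ≤ c (i + 1) ∧
      ukResidual k ↥(c (i + 1)) ≤ (c i).subgroupOf (c (i + 1))

lemma UkChain.refl {G : Type*} [Group G] (k : ℕ) (H : Subgroup G) : UkChain k H H :=
  ⟨0, fun _ => H, rfl, rfl, fun i hi => absurd hi (Nat.not_lt_zero i)⟩

lemma UkChain.trans {G : Type*} [Group G] {k : ℕ} {A B C : Subgroup G}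
    (h1 : UkChain k A B) (h2 : UkChain k B C) : UkChain k A C := by
  obtain ⟨m1, c1, hc10, hc1m, hs1⟩ := h1
  obtain ⟨m2, c2, hc20, hc2m, hs2⟩ := h2
  refine ⟨m1 + m2, fun i => if i ≤ m1 then c1 i else c2 (i - m1), by simp [hc10], ?_, ?_⟩
  · dsimp only
    rcases Nat.eq_zero_or_pos m2 with h | h
    · subst h
      simp only [Nat.add_zero, if_pos le_rfl, hc1m, ← hc20, hc2m]
    · rw [if_neg (by omega)]
      have : m1 + m2 - m1 = m2 := by omega
      rw [this, hc2m]
  · intro i hi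
    dsimp only
    beta_reduce
    by_cases h1' : i + 1 ≤ m1
    · rw [if_pos (by omega : i ≤ m1), if_pos h1']
      exact hs1 i (by omega)
    · by_cases h0 : i ≤ m1
      · have hieq : i = m1 := by omega
        subst hieq
        rw [if_pos le_rfl, if_neg h1', hc1m, ← hc20]
        have h2' : i + 1 - i = 1 := by omega
        rw [h2']
        exact hs2 0 (by omega)
      · rw [if_neg h0, if_neg (by omega)]
        have h2' : i + 1 - m1 = (i - m1) + 1 := by omega
        rw [h2']
        exact hs2 (i - m1) (by omega)

lemma ukResidual_le {k : ℕ} {Q : Type*} [Group Q] {N : Subgroup Q} (hN : N.Normal)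
    (h : IsInUk k (Q ⧸ N)) : ukResidual k Q ≤ N := by
  have hmem : N ∈ {N : Subgroup Q | N.Normal ∧ ∀ [_h : N.Normal], IsInUk k (Q ⧸ N)} :=
    ⟨hN, fun {_} => h⟩
  exact iInf₂_le N hmem

lemma card_quot_subgroupOf {G : Type*} [Group G] (A B : Subgroup G) :
    Nat.card (↥B ⧸ A.subgroupOf B) = A.relIndex B :=
  (Subgroup.index_eq_card _).symm

lemma not_pow_dvd_of_dvd_prime {k p e : ℕ} (hk : 0 < k) (hp : p.Prime) (he : e ∣ p)
    (r : ℕ) (hr : r.Prime) : ¬ r ^ (k + 1) ∣ e := by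
  intro hd
  have h1 : r ^ (k + 1) ∣ p := hd.trans he
  have hr1 : 1 < r ^ (k + 1) := Nat.one_lt_pow (Nat.succ_ne_zero k) hr.one_lt
  rcases (Nat.dvd_prime hp).mp h1 with h | h
  · omega
  · have hrp : r = p := (Nat.prime_dvd_prime_iff_eq hr hp).mp
      (by rw [← h]; exact dvd_pow_self r (Nat.succ_ne_zero k))
    subst hrp
    have := Nat.pow_right_injective hr.two_le (h.trans (pow_one r).symm)
    omega

lemma not_pow_dvd_of_dvd_mul {k n p q e : ℕ} (hk : 0 < k) (hn : n ≤ k)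
    (hp : p.Prime) (hq : q.Prime) (hpq : p ≠ q) (he : e ∣ p * q ^ n)
    (r : ℕ) (hr : r.Prime) : ¬ r ^ (k + 1) ∣ e := by
  intro hd
  have h1 : r ^ (k + 1) ∣ p * q ^ n := hd.trans he
  have hrd : r ∣ p * q ^ n := (dvd_pow_self r (Nat.succ_ne_zero k)).trans h1
  rcases (Nat.Prime.dvd_mul hr).mp hrd with h | h
  · have hrp : r = p := (Nat.prime_dvd_prime_iff_eq hr hp).mp h
    subst hrp
    have h2 : r * r ^ k ∣ r * q ^ n := by rwa [pow_succ'] at h1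
    have h3 : r ^ k ∣ q ^ n := (Nat.mul_dvd_mul_iff_left hr.pos).mp h2
    have h4 : r ∣ q ^ n := dvd_trans (dvd_pow_self r (by omega)) h3
    exact hpq ((Nat.prime_dvd_prime_iff_eq hr hq).mp (hr.dvd_of_dvd_pow h4))
  · have hrq : r = q := (Nat.prime_dvd_prime_iff_eq hr hq).mp (hr.dvd_of_dvd_pow h)
    subst hrq
    have hco : Nat.Coprime (r ^ (k + 1)) p :=
      Nat.Coprime.pow_left _ ((Nat.coprime_primes hr hp).mpr (fun hh => hpq hh.symm))
    rw [mul_comm] at h1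
    have h3 : r ^ (k + 1) ∣ r ^ n := hco.dvd_of_dvd_mul_right h1
    have := (Nat.pow_dvd_pow_iff_le_right hr.one_lt).mp h3
    omega

/-- A "normal prime series": a chain of normal subgroups from `⊥` to `⊤` with
prime relative index at each step. -/
def NPS (Q : Type*) [Group Q] (c : ℕ → Subgroup Q) (t : ℕ) : Prop :=
  c 0 = ⊥ ∧ c t = ⊤ ∧ (∀ i, (c i).Normal) ∧
    ∀ i, i < t → c i ≤ c (i + 1) ∧ ∃ p : ℕ, p.Prime ∧ (c i).relIndex (c (i + 1)) = p

lemma NPS.lift {Q : Type*} [Group Q] (N : Subgroup Q) [hN : N.Normal] {p₀ : ℕ}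
    (hp₀ : p₀.Prime) (hcN : Nat.card N = p₀) {d : ℕ → Subgroup (Q ⧸ N)} {t : ℕ}
    (h : NPS (Q ⧸ N) d t) : ∃ c : ℕ → Subgroup Q, NPS Q c (t + 1) := by
  obtain ⟨hd0, hdt, hdn, hstep⟩ := h
  set π := QuotientGroup.mk' N with hπ
  have hπs : Function.Surjective π := QuotientGroup.mk'_surjective N
  refine ⟨fun i => if i = 0 then ⊥ else (d (i - 1)).comap π, if_pos rfl, ?_, ?_, ?_⟩
  · dsimp only
    rw [if_neg (Nat.succ_ne_zero t)]
    simp only [Nat.add_sub_cancel]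
    rw [hdt, Subgroup.comap_top]
  · intro i
    dsimp only
    split
    · exact inferInstance
    · exact (hdn _).comap π
  · intro i hi
    dsimp only
    rcases Nat.eq_zero_or_pos i with rfl | hi0
    · rw [if_pos rfl, if_neg (by omega : ¬ (0:ℕ) + 1 = 0)]
      have h01 : (0:ℕ) + 1 - 1 = 0 := rfl
      have hc1 : (d (0 + 1 - 1)).comap π = N := by
        rw [h01, hd0]
        exact QuotientGroup.ker_mk' N
      rw [hc1]
      refine ⟨bot_le, p₀, hp₀, ?_⟩
      rw [Subgroup.relIndex_bot_left, hcN]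
    · have hii : i ≠ 0 := hi0.ne'
      rw [if_neg hii, if_neg (Nat.succ_ne_zero i)]
      have hi1 : i + 1 - 1 = (i - 1) + 1 := by omega
      rw [hi1]
      obtain ⟨hle, p, hp, hrel⟩ := hstep (i - 1) (by omega)
      refine ⟨Subgroup.comap_mono hle, p, hp, ?_⟩
      rw [Subgroup.relIndex_comap, Subgroup.map_comap_eq_self_of_surjective hπs]
      exact hrel

lemma isSupersolvable_of_NPS {Q : Type*} [Group Q] {c : ℕ → Subgroup Q} {t : ℕ}
    (h : NPS Q c t) : IsSupersolvable Q := by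
  obtain ⟨h0, ht, hnorm, hstep⟩ := h
  refine ⟨t, c, h0, ht, hnorm, fun i hi => (hstep i hi).1, ?_⟩
  intro i hi _inst
  obtain ⟨-, p, hp, hrel⟩ := hstep i hi
  haveI : Fact p.Prime := ⟨hp⟩
  exact isCyclic_of_prime_card (p := p) (by rw [card_quot_subgroupOf, hrel])

lemma isInUk_of_card_prime {k : ℕ} {Q : Type*} [Group Q] [Finite Q] {p : ℕ} (hk : 0 < k)
    (hp : p.Prime) (hc : Nat.card Q = p) : IsInUk k Q := by
  constructor
  · refine isSupersolvable_of_NPS (c := fun i => if i = 0 then ⊥ else ⊤) (t := 1) ?_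
    refine ⟨if_pos rfl, if_neg one_ne_zero, ?_, ?_⟩
    · intro i; dsimp only; split
      · exact inferInstance
      · exact inferInstance
    · intro i hi
      interval_cases i
      dsimp only
      have h1 : (if (0:ℕ) = 0 then (⊥:Subgroup Q) else ⊤) = ⊥ := if_pos rfl
      have h2 : (if (0:ℕ)+1 = 0 then (⊥:Subgroup Q) else ⊤) = ⊤ := if_neg (by omega)
      rw [h1, h2, Subgroup.relIndex_bot_left, Subgroup.card_top, hc]
      exact ⟨bot_le, p, hp, rfl⟩
  · intro r hr
    exact not_pow_dvd_of_dvd_prime hk hp (hc ▸ Group.exponent_dvd_nat_card) r hr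

lemma ukStep {G : Type*} [Group G] {H K : Subgroup G} {k : ℕ}
    (hHK : H ≤ K) {N : Subgroup ↥K} (hN : N.Normal)
    (hle : N ≤ H.subgroupOf K) (h : IsInUk k (↥K ⧸ N)) : UkChain k H K := by
  refine ⟨1, fun i => if i = 0 then H else K, if_pos rfl, if_neg one_ne_zero, ?_⟩
  intro i hi
  interval_cases i
  simp only [if_pos rfl, if_neg one_ne_zero]
  exact ⟨hHK, le_trans (ukResidual_le hN h) hle⟩

open scoped commutatorElement in
lemma exists_normal_prime_index (Q : Type*) [Group Q] [Finite Q] [Group.IsSolvable Q]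
    [Nontrivial Q] : ∃ (M : Subgroup Q) (p : ℕ), p.Prime ∧ M.Normal ∧ M.index = p := by
  have hD : commutator Q ≠ ⊤ := by
    intro hD
    have hds : ∀ n, derivedSeries Q n = ⊤ := by
      intro n; induction n with
      | zero => exact derivedSeries_zero Q
      | succ n ih => rw [derivedSeries_succ, ih, ← commutator_def, hD]
    obtain ⟨n, hn⟩ := Group.IsSolvable.solvable (G := Q)
    rw [hds n] at hn
    exact absurd hn bot_ne_top.symm
  haveI : Finite (Subgroup Q) := Finite.of_injective _ SetLike.coe_injective
  set s : Set (Subgroup Q) := {M | M ≠ ⊤ ∧ commutator Q ≤ M} with hs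
  obtain ⟨M, hMs, hMmax⟩ := Set.Finite.exists_maximalFor id s s.toFinite ⟨commutator Q, hD, le_rfl⟩
  obtain ⟨hMne, hDM⟩ := hMs
  have hMnormal : M.Normal := by
    constructor
    intro x hx g
    have hcomm : ⁅g, x⁆ ∈ M :=
      hDM (Subgroup.commutator_mem_commutator (Subgroup.mem_top g) (Subgroup.mem_top x))
    have hgx : g * x * g⁻¹ = ⁅g, x⁆ * x := by
      rw [commutatorElement_def]; group
    rw [hgx]; exact M.mul_mem hcomm hx
  haveI := hMnormal
  have hBcard : Nat.card (Q ⧸ M) = M.index := (Subgroup.index_eq_card M).symm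
  have hBne1 : Nat.card (Q ⧸ M) ≠ 1 := by
    rw [hBcard]
    intro h; exact hMne (Subgroup.index_eq_one.mp h)
  obtain ⟨r, hr, hrd⟩ := Nat.exists_prime_and_dvd hBne1
  haveI : Fact r.Prime := ⟨hr⟩
  obtain ⟨y, hy⟩ := exists_prime_orderOf_dvd_card' (G := Q ⧸ M) r hrd
  set P : Subgroup Q := (Subgroup.zpowers y).comap (QuotientGroup.mk' M) with hP
  have hMP : M ≤ P := by
    intro x hx
    rw [hP, Subgroup.mem_comap]
    have hx1 : (QuotientGroup.mk' M) x = 1 := (QuotientGroup.eq_one_iff x).mpr hx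
    rw [hx1]; exact Subgroup.one_mem _
  have hPD : commutator Q ≤ P := hDM.trans hMP
  have hPneM : P ≠ M := by
    intro hPM
    obtain ⟨x, rfl⟩ := QuotientGroup.mk'_surjective M y
    have hxP : x ∈ P := by
      rw [hP, Subgroup.mem_comap]
      exact Subgroup.mem_zpowers _
    rw [hPM] at hxP
    have hx1 : (QuotientGroup.mk' M) x = 1 := (QuotientGroup.eq_one_iff x).mpr hxP
    rw [hx1, orderOf_one] at hy
    exact hr.one_lt.ne' hy.symm
  have hPtop : P = ⊤ := by
    by_contra hPt
    exact hPneM (le_antisymm (hMmax ⟨hPt, hPD⟩ hMP) hMP)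
  have hytop : Subgroup.zpowers y = ⊤ := by
    have hmc := Subgroup.map_comap_eq_self_of_surjective
      (QuotientGroup.mk'_surjective M) (Subgroup.zpowers y)
    rw [← hP, hPtop] at hmc
    rw [← hmc, ← MonoidHom.range_eq_map]
    exact (MonoidHom.range_eq_top_of_surjective _ (QuotientGroup.mk'_surjective M))
  have hcard : Nat.card (Q ⧸ M) = r := by
    rw [← hy, ← Nat.card_zpowers, hytop, Subgroup.card_top]
  exact ⟨M, r, hr, hMnormal, by rw [← hBcard, hcard]⟩

lemma subgroupOf_normal_of_le {G : Type*} [Group G] {H M K : Subgroup G}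
    (_hHM : H ≤ M) (hMK : M ≤ K) (h : (H.subgroupOf K).Normal) :
    (H.subgroupOf M).Normal := by
  constructor
  intro x hx g
  rw [Subgroup.mem_subgroupOf] at hx ⊢
  have := h.conj_mem ⟨(x : G), hMK x.2⟩ (by rwa [Subgroup.mem_subgroupOf]) ⟨(g : G), hMK g.2⟩
  rwa [Subgroup.mem_subgroupOf] at this

lemma ukChain_of_normal {G : Type*} [Group G] [Finite G] [Group.IsSolvable G] {k : ℕ} (hk : 0 < k)
    {H K : Subgroup G} (hHK : H ≤ K) (hn : (H.subgroupOf K).Normal) : UkChain k H K := by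
  have key : ∀ (t : ℕ) (H K : Subgroup G), H.relIndex K = t → H ≤ K →
      (H.subgroupOf K).Normal → UkChain k H K := by
    intro t
    induction t using Nat.strong_induction_on with
    | _ t ih =>
    intro H K ht hHK hn
    by_cases hEq : H = K
    · subst hEq; exact UkChain.refl k H
    · haveI := hn
      have hne : ¬ K ≤ H := fun h => hEq (le_antisymm hHK h)
      have h1 : (H.subgroupOf K).index ≠ 1 := by
        intro h
        exact hne (Subgroup.subgroupOf_eq_top.mp (Subgroup.index_eq_one.mp h))
      have h0 : (H.subgroupOf K).index ≠ 0 := Subgroup.index_ne_zero_of_finite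
      haveI : Nontrivial (↥K ⧸ H.subgroupOf K) := by
        rw [← Finite.one_lt_card_iff_nontrivial]
        have hcq : Nat.card (↥K ⧸ H.subgroupOf K) = (H.subgroupOf K).index :=
          (Subgroup.index_eq_card _).symm
        omega
      obtain ⟨Mbar, p, hp, hMn, hMidx⟩ := exists_normal_prime_index (↥K ⧸ H.subgroupOf K)
      set π := QuotientGroup.mk' (H.subgroupOf K) with hπ
      set M' : Subgroup ↥K := Mbar.comap π with hM'
      set M : Subgroup G := M'.map K.subtype with hM
      have hMK : M ≤ K := Subgroup.map_subtype_le M'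
      have hH'M' : H.subgroupOf K ≤ M' := by
        intro x hx
        rw [hM', Subgroup.mem_comap]
        have hx1 : π x = 1 := (QuotientGroup.eq_one_iff x).mpr hx
        rw [hx1]; exact Mbar.one_mem
      have hHM : H ≤ M := by
        intro x hx
        exact ⟨⟨x, hHK hx⟩, hH'M' (by rwa [Subgroup.mem_subgroupOf]), rfl⟩
      have hM'sub : M.subgroupOf K = M' := by
        rw [hM]
        exact Subgroup.comap_map_eq_self_of_injective K.subtype_injective M'
      have hM'idx : (M.subgroupOf K).index = p := by
        rw [hM'sub, hM']
        rw [Subgroup.index_comap_of_surjective _ (QuotientGroup.mk'_surjective _)]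
        exact hMidx
      have hstep : UkChain k M K := by
        have hNn : (M.subgroupOf K).Normal := hM'sub ▸ hMn.comap π
        haveI := hNn
        refine ukStep hMK hNn le_rfl ?_
        refine isInUk_of_card_prime hk hp ?_
        rw [← hM'idx]
        exact (Subgroup.index_eq_card _).symm
      have hMKrel : M.relIndex K = p := hM'idx
      have hrel : H.relIndex M * M.relIndex K = t := by
        rw [← ht]
        exact Subgroup.relIndex_mul_relIndex H M K hHM hMK
      have hHMne : H.relIndex M ≠ 0 :=
        (Subgroup.index_ne_zero_of_finite (H := H.subgroupOf M))
      have hlt : H.relIndex M < t := by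
        rw [← hrel, hMKrel]
        have h2 := hp.two_le
        have h3 : 0 < H.relIndex M := Nat.pos_of_ne_zero hHMne
        exact (Nat.lt_mul_iff_one_lt_right h3).mpr (by omega)
      exact (ih _ hlt H M rfl hHM (subgroupOf_normal_of_le hHM hMK hn)).trans hstep
  exact key _ H K rfl hHK hn

universe u

lemma pgroup_series {q : ℕ} (hq : q.Prime) :
    ∀ (m : ℕ) (P : Type u) [Group P] [Finite P], Nat.card P = m → IsPGroup q P →
      ∃ (t : ℕ) (c : ℕ → Subgroup P), NPS P c t := by
  intro m
  induction m using Nat.strong_induction_on with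
  | _ m ih =>
  intro P _ _ hm hP
  haveI : Fact q.Prime := ⟨hq⟩
  rcases subsingleton_or_nontrivial P with hs | hs
  · refine ⟨0, fun _ => ⊥, rfl, ?_, fun _ => inferInstance, fun i hi => absurd hi (by omega)⟩
    ext x
    simp [Subsingleton.elim x 1]
  · haveI := IsPGroup.center_nontrivial hP
    have hPc : IsPGroup q ↥(Subgroup.center P) := hP.to_subgroup (Subgroup.center P)
    obtain ⟨a, hac⟩ := IsPGroup.iff_card.mp hPc
    have ha0 : a ≠ 0 := by
      rintro rfl
      rw [pow_zero] at hac
      have := Finite.one_lt_card_iff_nontrivial.mpr (inferInstance : Nontrivial ↥(Subgroup.center P))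
      omega
    have hdvd : q ∣ Nat.card ↥(Subgroup.center P) := by
      rw [hac]; exact dvd_pow_self q ha0
    obtain ⟨z, hz⟩ := exists_prime_orderOf_dvd_card' (G := ↥(Subgroup.center P)) q hdvd
    set N : Subgroup P := Subgroup.zpowers (z : P) with hNdef
    have hNle : N ≤ Subgroup.center P := by
      rw [hNdef, Subgroup.zpowers_le]; exact z.2
    haveI hNn : N.Normal := by
      constructor
      intro x hx g
      have hxc := hNle hx
      rw [Subgroup.mem_center_iff] at hxc
      rw [hxc g, mul_assoc, mul_inv_cancel, mul_one]
      exact hx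
    have hcN : Nat.card N = q := by
      rw [hNdef, Nat.card_zpowers]
      exact (orderOf_injective (Subgroup.center P).subtype Subtype.coe_injective z).trans hz
    have hcardQ : Nat.card P = Nat.card (P ⧸ N) * Nat.card N :=
      Subgroup.card_eq_card_quotient_mul_card_subgroup N
    have hmpos : m ≠ 0 := by
      rw [← hm]; exact Nat.card_pos.ne'
    have hqq : Nat.card (P ⧸ N) * q = m := by
      rw [← hcN, ← hcardQ, hm]
    have hlt : Nat.card (P ⧸ N) < m := by
      have h2 := hq.two_le
      have hpos : 0 < Nat.card (P ⧸ N) := Nat.card_pos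
      nlinarith
    obtain ⟨t, d, hd⟩ := ih _ hlt (P ⧸ N) rfl (hP.to_quotient N)
    obtain ⟨c, hc⟩ := hd.lift N hq hcN
    exact ⟨t + 1, c, hc⟩

lemma exists_minimal_normal (Q : Type*) [Group Q] [Finite Q] [Nontrivial Q] :
    ∃ N : Subgroup Q, N.Normal ∧ N ≠ ⊥ ∧
      ∀ M : Subgroup Q, M.Normal → M ≠ ⊥ → M ≤ N → M = N := by
  set s : Set ℕ := {n | ∃ N : Subgroup Q, N.Normal ∧ N ≠ ⊥ ∧ Nat.card N = n} with hs
  have hne : s.Nonempty := ⟨Nat.card (⊤ : Subgroup Q), ⊤, inferInstance,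
    bot_ne_top.symm, rfl⟩
  obtain ⟨N, hNn, hNb, hNc⟩ := Nat.sInf_mem hne
  refine ⟨N, hNn, hNb, fun M hMn hMb hle => ?_⟩
  have h1 : Nat.card M ∈ s := ⟨M, hMn, hMb, rfl⟩
  have h2 : sInf s ≤ Nat.card M := Nat.sInf_le h1
  exact Subgroup.eq_of_le_of_card_ge hle (by rw [hNc]; exact h2)

lemma isInUk_of_special {Q : Type*} [Group Q] [Finite Q] [Group.IsSolvable Q] {k p q n : ℕ}
    (hk : 0 < k) (hn : n ≤ k) (hp : p.Prime) (hq : q.Prime)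
    (hnn : ¬ Group.IsNilpotent Q) (hcard : Nat.card Q = p * q ^ n)
    {S : Subgroup Q} (hSidx : S.index = p) (hScore : S.normalCore = ⊥) :
    IsInUk k Q := by
  haveI : Fact q.Prime := ⟨hq⟩
  haveI : Fact p.Prime := ⟨hp⟩
  have hpq : p ≠ q := by
    rintro rfl
    exact hnn (IsPGroup.isNilpotent (IsPGroup.of_card (n := n + 1) (by rw [hcard, pow_succ'])))
  have hScard : Nat.card S = q ^ n := by
    have hmi := Subgroup.card_mul_index S
    rw [hSidx, hcard] at hmi
    have hp0 : 0 < p := hp.pos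
    rw [mul_comm p (q ^ n)] at hmi
    exact Nat.eq_of_mul_eq_mul_right hp0 hmi
  haveI : Nontrivial Q := by
    rw [← Finite.one_lt_card_iff_nontrivial, hcard]
    have h2 := hp.two_le
    have h1 : 1 ≤ q ^ n := Nat.one_le_pow _ _ hq.pos
    nlinarith
  obtain ⟨N, hNn, hNb, hNmin⟩ := exists_minimal_normal Q
  haveI := hNn
  have hNcomm : ⁅N, N⁆ = ⊥ := by
    rcases eq_or_ne ⁅N, N⁆ ⊥ with h | h
    · exact h
    · exfalso
      have hle : ⁅N, N⁆ ≤ N := Subgroup.commutator_le_left N N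
      haveI hcn : (⁅N, N⁆ : Subgroup Q).Normal := Subgroup.commutator_normal N N
      have hNN : ⁅N, N⁆ = N := hNmin ⁅N, N⁆ hcn h hle
      have hmap : ∀ i : ℕ, (derivedSeries ↥N i).map N.subtype = N := by
        intro i
        induction i with
        | zero =>
          rw [derivedSeries_zero, ← MonoidHom.range_eq_map]
          exact N.range_subtype
        | succ i ihd =>
          rw [derivedSeries_succ, Subgroup.map_commutator, ihd, hNN]
      obtain ⟨j, hj⟩ := Group.IsSolvable.solvable (G := ↥N)
      have hmj := hmap j
      rw [hj, Subgroup.map_bot] at hmj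
      exact hNb hmj.symm
  have hNcentral : ∀ x ∈ N, ∀ y ∈ N, x * y = y * x := by
    have hcen := Subgroup.commutator_eq_bot_iff_le_centralizer.mp hNcomm
    intro x hx y hy
    have hxc := hcen hx
    rw [Subgroup.mem_centralizer_iff] at hxc
    exact (hxc y hy).symm
  have hNcard1 : Nat.card N ≠ 1 := fun h => hNb (Subgroup.card_eq_one.mp h)
  obtain ⟨r, hr, hrd⟩ := Nat.exists_prime_and_dvd hNcard1
  haveI : Fact r.Prime := ⟨hr⟩
  have hpow : ∀ x ∈ N, x ^ r = 1 := by
    set T : Subgroup Q :=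
      { carrier := {x | x ∈ N ∧ x ^ r = 1}
        one_mem' := ⟨N.one_mem, one_pow r⟩
        mul_mem' := by
          rintro a b ⟨haN, har⟩ ⟨hbN, hbr⟩
          refine ⟨N.mul_mem haN hbN, ?_⟩
          have hcomm : Commute a b := hNcentral a haN b hbN
          rw [hcomm.mul_pow, har, hbr, one_mul]
        inv_mem' := by
          rintro a ⟨haN, har⟩
          exact ⟨N.inv_mem haN, by rw [inv_pow, har, inv_one]⟩ } with hT
    have hTn : T.Normal := by
      constructor
      rintro x ⟨hxN, hxr⟩ g
      refine ⟨hNn.conj_mem x hxN g, ?_⟩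
      rw [conj_pow, hxr, mul_one, mul_inv_cancel]
    have hTneb : T ≠ ⊥ := by
      obtain ⟨y, hy⟩ := exists_prime_orderOf_dvd_card' (G := ↥N) r hrd
      have hyo : orderOf (y : Q) = r := by
        rw [← hy]; exact orderOf_injective N.subtype Subtype.coe_injective y
      intro hTb
      have hyT : (y : Q) ∈ T := ⟨y.2, by rw [← hyo]; exact pow_orderOf_eq_one _⟩
      rw [hTb, Subgroup.mem_bot] at hyT
      rw [hyT, orderOf_one] at hyo
      exact hr.one_lt.ne' hyo.symm
    have hTN : T ≤ N := fun x hx => hx.1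
    have hTeq := hNmin T hTn hTneb hTN
    intro x hx
    rw [← hTeq] at hx
    exact hx.2
  have hNp : IsPGroup r ↥N := by
    intro g
    refine ⟨1, ?_⟩
    rw [pow_one]
    exact Subtype.ext (by rw [SubmonoidClass.coe_pow]; exact hpow (g : Q) g.2)
  have hrq : r ≠ q := by
    rintro rfl
    obtain ⟨Pq, hNPq⟩ := hNp.exists_le_sylow
    have hfq : (Nat.card Q).factorization r = n := by
      rw [hcard, Nat.factorization_mul hp.pos.ne' (pow_ne_zero n hq.pos.ne'),
        Finsupp.add_apply, hp.factorization, hq.factorization_pow]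
      simp [Finsupp.single_apply, hpq]
    set SS : Sylow r Q := Sylow.ofCard S (by rw [hScard, hfq]) with hSS
    obtain ⟨g, hg⟩ := MulAction.exists_smul_eq Q Pq SS
    have hcoe : (MulAut.conj g • (Pq : Subgroup Q)) = S := by
      have hcg := congrArg Sylow.toSubgroup hg
      rw [Sylow.smul_def, Sylow.pointwise_smul_def] at hcg
      rw [hcg, hSS, Sylow.coe_ofCard]
    have hNS : N ≤ S := by
      rw [← hcoe]
      calc N = MulAut.conj g • N := (Subgroup.Normal.conj_smul_eq_self g N).symm
        _ ≤ MulAut.conj g • (Pq : Subgroup Q) :=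
          Subgroup.pointwise_smul_le_pointwise_smul_iff.mpr hNPq
    have hNcore : N ≤ S.normalCore := Subgroup.normal_le_normalCore.mpr hNS
    rw [hScore] at hNcore
    exact hNb (le_bot_iff.mp hNcore)
  have hrp : r = p := by
    have hrdQ : r ∣ p * q ^ n := by
      have h1 : Nat.card N ∣ Nat.card Q := Subgroup.card_subgroup_dvd_card N
      rw [hcard] at h1
      exact hrd.trans h1
    rcases (Nat.Prime.dvd_mul hr).mp hrdQ with h | h
    · exact (Nat.prime_dvd_prime_iff_eq hr hp).mp h
    · exact absurd ((Nat.prime_dvd_prime_iff_eq hr hq).mp (hr.dvd_of_dvd_pow h)) hrq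
  subst hrp
  obtain ⟨a, ha⟩ := IsPGroup.iff_card.mp hNp
  have ha1 : a = 1 := by
    have h1 : Nat.card ↥N ∣ r * q ^ n := by
      rw [← hcard]; exact Subgroup.card_subgroup_dvd_card N
    rw [ha] at h1
    have ha0 : a ≠ 0 := by
      rintro rfl
      rw [pow_zero] at ha
      exact hNcard1 ha
    by_contra hane
    have ha2 : 2 ≤ a := by omega
    have h2 : r * r ∣ r * q ^ n := by
      refine dvd_trans ?_ h1
      calc r * r = r ^ 2 := (sq r).symm
        _ ∣ r ^ a := pow_dvd_pow r ha2
    have h3 : r ∣ q ^ n := (Nat.mul_dvd_mul_iff_left hr.pos).mp h2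
    exact hrq ((Nat.prime_dvd_prime_iff_eq hr hq).mp (hr.dvd_of_dvd_pow h3))
  rw [ha1, pow_one] at ha
  have hQN : Nat.card (Q ⧸ N) = q ^ n := by
    have hcc := Subgroup.card_eq_card_quotient_mul_card_subgroup N
    rw [hcard, ha, mul_comm (Nat.card (Q ⧸ N)) r] at hcc
    exact (Nat.eq_of_mul_eq_mul_left hr.pos hcc).symm
  have hQNp : IsPGroup q (Q ⧸ N) := IsPGroup.of_card hQN
  obtain ⟨t, d, hd⟩ := pgroup_series hq (Nat.card (Q ⧸ N)) (Q ⧸ N) rfl hQNp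
  obtain ⟨c, hc⟩ := hd.lift N hr ha
  constructor
  · exact isSupersolvable_of_NPS hc
  · intro s hs
    exact not_pow_dvd_of_dvd_mul hk hn hr hq hpq (hcard ▸ Group.exponent_dvd_nat_card) s hs

lemma ukChain_of_modular {G : Type*} [Group G] [Finite G] [Group.IsSolvable G] {k : ℕ}
    (hk : 0 < k) {n : ℕ} (hkn : n ≤ k) {H K : Subgroup G}
    (h : ModularlyEmbedded n H K) : UkChain k H K := by
  obtain ⟨hHK, hcase⟩ := h
  rcases hcase with hnorm | ⟨p, q, hp, hq, hnn, hcard, hidx⟩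
  · exact ukChain_of_normal hk hHK hnorm
  · set C := (H.subgroupOf K).normalCore with hC
    haveI : C.Normal := Subgroup.normalCore_normal _
    refine ukStep hHK (N := C) (Subgroup.normalCore_normal _)
      (Subgroup.normalCore_le _) ?_
    set φ := QuotientGroup.mk' C with hφ
    have hφs : Function.Surjective φ := QuotientGroup.mk'_surjective C
    have hker : φ.ker = C := QuotientGroup.ker_mk' C
    have hkerle : φ.ker ≤ H.subgroupOf K := by
      rw [hker]; exact Subgroup.normalCore_le _
    set S : Subgroup (↥K ⧸ C) := (H.subgroupOf K).map φ with hS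
    have hSidx : S.index = p := by
      rw [hS, Subgroup.index_map_eq _ hφs hkerle, hidx]
    have hScore : S.normalCore = ⊥ := by
      have hcomap : S.normalCore.comap φ ≤ C := by
        have h1 : S.normalCore.comap φ ≤ (H.subgroupOf K) := by
          have h2 : S.normalCore ≤ S := Subgroup.normalCore_le S
          have h3 : S.comap φ = H.subgroupOf K ⊔ φ.ker := Subgroup.comap_map_eq φ _
          calc S.normalCore.comap φ ≤ S.comap φ := Subgroup.comap_mono h2
            _ = H.subgroupOf K ⊔ φ.ker := h3
            _ = H.subgroupOf K := sup_of_le_left hkerle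
        haveI : (S.normalCore.comap φ).Normal := S.normalCore_normal.comap φ
        exact Subgroup.normal_le_normalCore.mpr h1
      have hmap := Subgroup.map_comap_eq_self_of_surjective hφs S.normalCore
      refine le_bot_iff.mp ?_
      calc S.normalCore = (S.normalCore.comap φ).map φ := hmap.symm
        _ ≤ C.map φ := Subgroup.map_mono hcomap
        _ ≤ ⊥ := by
          intro x hx
          obtain ⟨y, hy, rfl⟩ := hx
          rw [Subgroup.mem_bot]
          exact (QuotientGroup.eq_one_iff y).mpr hy
    exact isInUk_of_special hk hkn hp hq hnn hcard hSidx hScore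

end Aux

/-- Lemma 3.7: in a finite soluble group, every `k`-submodular subgroup is
`U_k`-subnormal. -/
theorem ukSubnormal_of_kSubmodular {G : Type*} [Group G] [Finite G]
    [Group.IsSolvable G] {k : ℕ} (hk : 0 < k) {H : Subgroup G}
    (hsub : KSubmodularIn k H ⊤) : UkSubnormal k H := by
  obtain ⟨m, c, hc0, hcm, hstep⟩ := hsub
  have key : ∀ j, j ≤ m → UkChain k H (c j) := by
    intro j
    induction j with
    | zero => intro _; rw [hc0]; exact UkChain.refl k H
    | succ j ih =>
      intro hj
      obtain ⟨n, hn0, hnk, hmod⟩ := hstep j (by omega)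
      exact (ih (by omega)).trans (ukChain_of_modular hk hnk hmod)
  have := key m le_rfl
  rw [hcm] at this
  obtain ⟨m', c', h0, hm, hs⟩ := this
  exact ⟨m', c', h0, hm, hs⟩
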